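/- Identifiability of the SNSS.sd functional (Proposition 1(1), sufficiency). Let p ≥ 1, let A be an invertible real p×p matrix, let D₁ be a diagonal p×p matrix with strictly positive diagonal entries, let D₂ be a diagonal p×p matrix, and assume the p ratios (D₂)ᵢᵢ/(D₁)ᵢᵢ, i = 1,…,p, are pairwise distinct. Set M₁ = A D₁ Aᵀ and M₂ = A D₂ Aᵀ. If W is a real p×p matrix satisfying W M₁ Wᵀ = I and W M₂ Wᵀ is diagonal, then there exists a signed permutation matrix Q such that W A = Q D₁^{-1/2}; in particular W A is a generalized permutation matrix. -/

import Mathlib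

open Matrix

/-- A signed permutation matrix: exactly one nonzero entry in each row and each
column, each such entry being `1` or `-1`. -/
def IsSignedPerm {p : ℕ} (Q : Matrix (Fin p) (Fin p) ℝ) : Prop :=
  (∀ i, ∃! j, Q i j ≠ 0) ∧ (∀ j, ∃! i, Q i j ≠ 0) ∧
  (∀ i j, Q i j ≠ 0 → Q i j = 1 ∨ Q i j = -1)

/-- A generalized permutation matrix: exactly one nonzero entry in each row and
each column. -/
def IsGenPerm {p : ℕ} (Q : Matrix (Fin p) (Fin p) ℝ) : Prop :=
  (∀ i, ∃! j, Q i j ≠ 0) ∧ (∀ j, ∃! i, Q i j ≠ 0)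

/-- The positive semidefinite square root of a positive semidefinite matrix
(as defined in Mathlib of December 2024, removed since). -/
noncomputable def Matrix.PosSemidef.sqrt {n : Type*} [Fintype n] [DecidableEq n]
    {A : Matrix n n ℝ} (hA : A.PosSemidef) : Matrix n n ℝ :=
  hA.isHermitian.eigenvectorUnitary.1 * diagonal ((↑) ∘ (√·) ∘ hA.isHermitian.eigenvalues) *
  (star hA.isHermitian.eigenvectorUnitary : Matrix n n ℝ)

open scoped Classical in
/-- For a symmetric positive (semi)definite matrix `M`, `invSqrt M` is the inverse
of its unique positive semidefinite square root, i.e. `M^{-1/2}`. -/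
noncomputable def invSqrt {p : ℕ} (M : Matrix (Fin p) (Fin p) ℝ) : Matrix (Fin p) (Fin p) ℝ :=
  if h : M.PosSemidef then h.sqrt⁻¹ else 0

/-- Identifiability of the SNSS.sd functional (sufficiency). -/
theorem snss_sd_identifiable {p : ℕ} (hp : 1 ≤ p)
    (A D₁ D₂ W : Matrix (Fin p) (Fin p) ℝ)
    (hA : IsUnit A)
    (hD₁ : D₁.IsDiag) (hD₁pos : ∀ i, 0 < D₁ i i)
    (hD₂ : D₂.IsDiag)
    (hdist : ∀ i j, i ≠ j → D₂ i i / D₁ i i ≠ D₂ j j / D₁ j j)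
    (hW1 : W * (A * D₁ * Aᵀ) * Wᵀ = 1)
    (hW2 : (W * (A * D₂ * Aᵀ) * Wᵀ).IsDiag) :
    (∃ Q : Matrix (Fin p) (Fin p) ℝ, IsSignedPerm Q ∧
      W * A = Q * Matrix.diagonal (fun i => (Real.sqrt (D₁ i i))⁻¹)) ∧
    IsGenPerm (W * A) := by
  classical
  set s : Fin p → ℝ := fun i => Real.sqrt (D₁ i i) with hs
  have hspos : ∀ i, 0 < s i := fun i => Real.sqrt_pos.mpr (hD₁pos i)
  have hd0 : ∀ i, D₁ i i ≠ 0 := fun i => (hD₁pos i).ne'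
  set Q : Matrix (Fin p) (Fin p) ℝ := W * A * Matrix.diagonal s with hQdef
  have hss : Matrix.diagonal s * Matrix.diagonal s = D₁ := by
    rw [Matrix.diagonal_mul_diagonal,
      show (fun i => s i * s i) = fun i => D₁ i i from
        funext fun i => Real.mul_self_sqrt (hD₁pos i).le]
    exact hD₁.diagonal_diag
  have hQQ : Q * Qᵀ = 1 := by
    rw [hQdef]
    simp only [Matrix.transpose_mul, Matrix.diagonal_transpose]
    calc W * A * Matrix.diagonal s * (Matrix.diagonal s * (Aᵀ * Wᵀ))
        = W * (A * (Matrix.diagonal s * Matrix.diagonal s) * Aᵀ) * Wᵀ := by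
          simp only [Matrix.mul_assoc]
      _ = 1 := by rw [hss]; exact hW1
  have hQtQ : Qᵀ * Q = 1 := mul_eq_one_comm.mp hQQ
  set l : Fin p → ℝ := fun i => D₂ i i / D₁ i i with hl
  have hsls : Matrix.diagonal s * Matrix.diagonal l * Matrix.diagonal s = D₂ := by
    rw [Matrix.diagonal_mul_diagonal, Matrix.diagonal_mul_diagonal,
      show (fun i => s i * l i * s i) = fun i => D₂ i i from funext fun i => by
        rw [mul_right_comm, Real.mul_self_sqrt (hD₁pos i).le, hl, mul_comm,
          div_mul_cancel₀ _ (hd0 i)]]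
    exact hD₂.diagonal_diag
  set M : Matrix (Fin p) (Fin p) ℝ := W * (A * D₂ * Aᵀ) * Wᵀ with hM
  set μ : Fin p → ℝ := fun i => M i i with hμ
  have hMeq : M = Matrix.diagonal μ := (hW2.diagonal_diag).symm
  have hQL : Q * Matrix.diagonal l * Qᵀ = M := by
    rw [hQdef, hM]
    simp only [Matrix.transpose_mul, Matrix.diagonal_transpose]
    calc W * A * Matrix.diagonal s * Matrix.diagonal l * (Matrix.diagonal s * (Aᵀ * Wᵀ))
        = W * (A * (Matrix.diagonal s * Matrix.diagonal l * Matrix.diagonal s) * Aᵀ) * Wᵀ := by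
          simp only [Matrix.mul_assoc]
      _ = W * (A * D₂ * Aᵀ) * Wᵀ := by rw [hsls]
  have hcomm : Q * Matrix.diagonal l = Matrix.diagonal μ * Q := by
    have h := congrArg (· * Q) (hQL.trans hMeq)
    simpa [Matrix.mul_assoc, hQtQ] using h
  have hentry : ∀ i j, Q i j * l j = μ i * Q i j := fun i j => by
    have h := congrFun (congrFun hcomm i) j
    simpa [Matrix.mul_diagonal, Matrix.diagonal_mul] using h
  have hrowsum : ∀ i i', (∑ k, Q i k * Q i' k) = if i = i' then (1:ℝ) else 0 := by
    intro i i'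
    have h := congrFun (congrFun hQQ i) i'
    simpa [Matrix.mul_apply, Matrix.one_apply] using h
  have hcolsum : ∀ j j', (∑ k, Q k j * Q k j') = if j = j' then (1:ℝ) else 0 := by
    intro j j'
    have h := congrFun (congrFun hQtQ j) j'
    simpa [Matrix.mul_apply, Matrix.one_apply] using h
  have hrow_ex : ∀ i, ∃ j, Q i j ≠ 0 := by
    intro i
    by_contra h
    push_neg at h
    have h1 := hrowsum i i
    simp [h] at h1
  have hrow_uniq : ∀ i j j', Q i j ≠ 0 → Q i j' ≠ 0 → j = j' := by
    intro i j j' h1 h2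
    by_contra hne
    have e1 : l j = μ i := mul_left_cancel₀ h1 (by rw [hentry i j, mul_comm])
    have e2 : l j' = μ i := mul_left_cancel₀ h2 (by rw [hentry i j', mul_comm])
    exact hdist j j' hne (e1.trans e2.symm)
  have hsingle : ∀ i j i', Q i j ≠ 0 → (∑ k, Q i k * Q i' k) = Q i j * Q i' j := by
    intro i j i' hj
    refine Finset.sum_eq_single j (fun k _ hk => ?_) (fun h => absurd (Finset.mem_univ j) h)
    have : Q i k = 0 := by
      by_contra hk0
      exact hk (hrow_uniq i k j hk0 hj)
    rw [this, zero_mul]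
  have hcol_ex : ∀ j, ∃ i, Q i j ≠ 0 := by
    intro j
    by_contra h
    push_neg at h
    have h1 := hcolsum j j
    simp [h] at h1
  have hcol_uniq : ∀ j i i', Q i j ≠ 0 → Q i' j ≠ 0 → i = i' := by
    intro j i i' h1 h2
    by_contra hne
    have h0 := hrowsum i i'
    rw [if_neg hne, hsingle i j i' h1] at h0
    exact mul_ne_zero h1 h2 h0
  have hpm : ∀ i j, Q i j ≠ 0 → Q i j = 1 ∨ Q i j = -1 := by
    intro i j hj
    have h1 := hrowsum i i
    rw [if_pos rfl, hsingle i j i hj] at h1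
    exact mul_self_eq_one_iff.mp h1
  have hQsp : IsSignedPerm Q := by
    refine ⟨fun i => ?_, fun j => ?_, hpm⟩
    · obtain ⟨j, hj⟩ := hrow_ex i
      exact ⟨j, hj, fun j' hj' => hrow_uniq i j' j hj' hj⟩
    · obtain ⟨i, hi⟩ := hcol_ex j
      exact ⟨i, hi, fun i' hi' => hcol_uniq j i' i hi' hi⟩
  have hWA : W * A = Q * Matrix.diagonal (fun i => (s i)⁻¹) := by
    rw [hQdef, Matrix.mul_assoc (W * A), Matrix.diagonal_mul_diagonal,
      show (fun i => s i * (s i)⁻¹) = fun _ => (1:ℝ) from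
        funext fun i => mul_inv_cancel₀ (hspos i).ne',
      Matrix.diagonal_one, Matrix.mul_one]
  have hentry' : ∀ i j, (W * A) i j = Q i j * (s j)⁻¹ := by
    intro i j
    rw [hWA, Matrix.mul_diagonal]
  constructor
  · exact ⟨Q, hQsp, by simp only [hs] at hWA ⊢; exact hWA⟩
  · constructor
    · intro i
      obtain ⟨j, hj, hu⟩ := hQsp.1 i
      refine ⟨j, ?_, fun j' hj' => hu j' ?_⟩
      · show (W * A) i j ≠ 0
        rw [hentry']; exact mul_ne_zero hj (inv_ne_zero (hspos j).ne')
      · have hj'' : (W * A) i j' ≠ 0 := hj'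
        rw [hentry'] at hj''; exact left_ne_zero_of_mul hj''
    · intro j
      obtain ⟨i, hi, hu⟩ := hQsp.2.1 j
      refine ⟨i, ?_, fun i' hi' => hu i' ?_⟩
      · show (W * A) i j ≠ 0
        rw [hentry']; exact mul_ne_zero hi (inv_ne_zero (hspos j).ne')
      · have hi'' : (W * A) i' j ≠ 0 := hi'
        rw [hentry'] at hi''; exact left_ne_zero_of_mul hi''
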